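/- arXiv:1710.01935 — 2 statements merged into one kernel-verified Lean document; each statement's English description precedes it below -/
import Mathlib

section
/- Let d > δ > 0 be real numbers. Then cosh(δ) · cosh(d+δ)/cosh(d−δ) ≥ 1, so that arccosh(cosh(δ)·cosh(d+δ)/cosh(d−δ)) is well defined; moreover arccosh(cosh(δ)·cosh(d+δ)/cosh(d−δ)) = 2·(tanh d)^{1/2}·δ^{1/2} + O(δ) as δ → 0 (with d fixed). -/
/-!
Write `x = cosh δ · cosh (d + δ) / cosh (d - δ)` and `T = tanh d`. Factoring `cosh d` out of
`cosh (d ± δ)` gives `x - 1 = (cosh δ - 1) + T · sinh 2δ / (cosh δ - T sinh δ)`, hence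
`2Tδ ≤ x - 1 ≤ 2Tδ + O(δ²)`. The power series of `cosh` give `t²/2 ≤ cosh t - 1 ≤ (t²/2) cosh t`,
so `t = arcosh x` satisfies `t² = 2(x - 1) + O((x - 1)²) = 4Tδ + O(δ²)`. Dividing `t² - 4Tδ` by
`t + 2√(Tδ) ≥ 2√(Tδ)` gives `|t - 2√(Tδ)| = O(δ^{3/2})`.
-/

open Real

/-- Inverse hyperbolic cosine. -/
noncomputable def arcosh (x : ℝ) : ℝ := Real.log (x + Real.sqrt (x ^ 2 - 1))

namespace Real

lemma one_add_sq_div_two_le_cosh (t : ℝ) : 1 + t ^ 2 / 2 ≤ cosh t := by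
  have := sum_le_hasSum (Finset.range 2)
    (fun n _ => div_nonneg ((even_two_mul n).pow_nonneg t) (Nat.cast_nonneg _)) (hasSum_cosh t)
  simpa [Finset.sum_range_succ] using this

lemma cosh_sub_one_le_sq_div_two_mul_cosh (t : ℝ) : cosh t - 1 ≤ t ^ 2 / 2 * cosh t := by
  have h := (hasSum_nat_add_iff' 1).2 (hasSum_cosh t)
  refine hasSum_le (fun n => ?_) (by simpa using h) ((hasSum_cosh t).mul_left (t ^ 2 / 2))
  have hfact : 2 * (2 * n).factorial ≤ (2 * (n + 1)).factorial := by
    rw [show 2 * (n + 1) = 2 * n + 1 + 1 by ring, Nat.factorial_succ, Nat.factorial_succ]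
    exact Nat.mul_le_mul (by omega) (Nat.le_mul_of_pos_left _ (by omega))
  calc t ^ (2 * (n + 1)) / (2 * (n + 1)).factorial
      = t ^ 2 * t ^ (2 * n) / (2 * (n + 1)).factorial := by ring
    _ ≤ t ^ 2 * t ^ (2 * n) / (2 * (2 * n).factorial) := by
      gcongr
      · exact mul_nonneg (sq_nonneg t) ((even_two_mul n).pow_nonneg t)
      · exact_mod_cast hfact
    _ = t ^ 2 / 2 * (t ^ (2 * n) / (2 * n).factorial) := by ring

lemma sinh_le_mul_cosh {t : ℝ} (ht : 0 ≤ t) : sinh t ≤ t * cosh t := by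
  refine hasSum_le (fun n => ?_) (hasSum_sinh t) ((hasSum_cosh t).mul_left t)
  rw [pow_succ', mul_div_assoc]
  gcongr
  omega

lemma cosh_sub_one_le_sq {t : ℝ} (ht : |t| ≤ 1) : cosh t - 1 ≤ t ^ 2 := by
  have hsq : t ^ 2 ≤ 1 := by nlinarith [sq_abs t, abs_nonneg t]
  have hexp := abs_exp_sub_one_le (x := t ^ 2 / 2) (by rw [abs_of_nonneg (by positivity)]; linarith)
  rw [abs_of_nonneg (by positivity : 0 ≤ t ^ 2 / 2)] at hexp
  linarith [cosh_le_exp_half_sq t, le_abs_self (exp (t ^ 2 / 2) - 1)]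

lemma sinh_sub_self_le_cube {t : ℝ} (ht₀ : 0 ≤ t) (ht₁ : t ≤ 1) : sinh t - t ≤ t ^ 3 := by
  have := mul_le_mul_of_nonneg_left (cosh_sub_one_le_sq (abs_le.2 ⟨by linarith, ht₁⟩)) ht₀
  linarith [sinh_le_mul_cosh ht₀]

lemma abs_arcosh_sq_sub_le {x : ℝ} (hx : 1 ≤ x) :
    |Real.arcosh x ^ 2 - 2 * (x - 1)| ≤ 2 * (x - 1) ^ 2 := by
  have hupper := one_add_sq_div_two_le_cosh (Real.arcosh x)
  have hlower := cosh_sub_one_le_sq_div_two_mul_cosh (Real.arcosh x)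
  rw [cosh_arcosh hx] at hupper hlower
  rw [abs_le]
  constructor <;> nlinarith [sq_nonneg (Real.arcosh x)]

lemma tanh_nonneg {x : ℝ} (hx : 0 ≤ x) : 0 ≤ tanh x := by
  rw [tanh_eq_sinh_div_cosh]
  exact div_nonneg (sinh_nonneg_iff.2 hx) (cosh_pos x).le

lemma exp_neg_le_cosh_sub_mul_sinh {a t : ℝ} (ha : a ≤ 1) (ht : 0 ≤ t) :
    exp (-t) ≤ cosh t - a * sinh t := by
  rw [← cosh_sub_sinh]
  nlinarith [sinh_nonneg_iff.2 ht]

lemma two_mul_le_sinh_two_mul_div {a t : ℝ} (ha₀ : 0 ≤ a) (ha₁ : a ≤ 1) (ht : 0 ≤ t) :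
    2 * t ≤ sinh (2 * t) / (cosh t - a * sinh t) := by
  have hD := (exp_pos (-t)).trans_le (exp_neg_le_cosh_sub_mul_sinh ha₁ ht)
  rw [le_div_iff₀ hD, sinh_two_mul]
  nlinarith [self_le_sinh_iff.2 ht, sinh_nonneg_iff.2 ht, one_le_cosh t, mul_nonneg ha₀ ht]

lemma sinh_two_mul_div_le {a t : ℝ} (ha : a ≤ 1) (ht₀ : 0 ≤ t) (ht₁ : t ≤ 1 / 2) :
    sinh (2 * t) / (cosh t - a * sinh t) ≤ 2 * t + 12 * t ^ 2 := by
  have hD : 1 / 2 ≤ cosh t - a * sinh t := by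
    linarith [one_sub_le_exp_neg t, exp_neg_le_cosh_sub_mul_sinh ha ht₀]
  have hc := cosh_sub_one_le_sq (abs_le.2 ⟨by linarith, by linarith⟩ : |t| ≤ 1)
  have hs := sinh_sub_self_le_cube ht₀ (by linarith)
  have hs₀ : 0 ≤ sinh t - t := by linarith [self_le_sinh_iff.2 ht₀]
  have hcosh : cosh t * (sinh t - t) ≤ 2 * t ^ 3 := by
    nlinarith [mul_le_mul_of_nonneg_right (by nlinarith : cosh t ≤ 2) hs₀]
  have hsinh : a * t * sinh t ≤ 2 * t ^ 2 := by
    nlinarith [mul_le_mul_of_nonneg_right ha (mul_nonneg ht₀ (sinh_nonneg_iff.2 ht₀))]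
  have hexpand : sinh (2 * t) - 2 * t * (cosh t - a * sinh t) =
      2 * (cosh t * (sinh t - t)) + 2 * (a * t * sinh t) := by
    rw [sinh_two_mul]; ring
  rw [div_le_iff₀ (by linarith)]
  nlinarith

lemma cosh_mul_cosh_add_div_cosh_sub_sub_one (d t : ℝ) :
    cosh t * cosh (d + t) / cosh (d - t) - 1 =
      (cosh t - 1) + tanh d * (sinh (2 * t) / (cosh t - tanh d * sinh t)) := by
  have hC : cosh d ≠ 0 := (cosh_pos d).ne'
  have hadd : cosh (d + t) = cosh d * (cosh t + tanh d * sinh t) := by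
    rw [cosh_add, tanh_eq_sinh_div_cosh]; field_simp
  have hsub : cosh (d - t) = cosh d * (cosh t - tanh d * sinh t) := by
    rw [cosh_sub, tanh_eq_sinh_div_cosh]; field_simp
  have hD : cosh t - tanh d * sinh t ≠ 0 :=
    right_ne_zero_of_mul (hsub ▸ (cosh_pos (d - t)).ne')
  rw [hadd, hsub, sinh_two_mul]
  field_simp
  ring

end Real

lemma abs_sub_le_abs_sq_sub_div {K : Type*} [Field K] [LinearOrder K] [IsStrictOrderedRing K]
    {a b : K} (ha : 0 ≤ a) (hb : 0 < b) :
    |a - b| ≤ |a ^ 2 - b ^ 2| / b := by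
  rw [le_div_iff₀ hb, sq_sub_sq, abs_mul, mul_comm |a + b|, abs_of_pos (by linarith : 0 < a + b)]
  gcongr
  linarith

lemma abs_sub_two_mul_sqrt_mul_sqrt_le {t c δ M : ℝ} (ht : 0 ≤ t) (hc : 0 < c) (hδ₀ : 0 < δ)
    (hδ₁ : δ ≤ 1) (h : |t ^ 2 - 4 * c * δ| ≤ M * δ ^ 2) :
    |t - 2 * √c * √δ| ≤ M / (2 * √c) * δ := by
  have hM : 0 ≤ M := nonneg_of_mul_nonneg_left ((abs_nonneg _).trans h) (by positivity)
  have hb : (2 * √c * √δ) ^ 2 = 4 * c * δ := by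
    rw [mul_pow, mul_pow, sq_sqrt hc.le, sq_sqrt hδ₀.le]; ring
  calc |t - 2 * √c * √δ| ≤ |t ^ 2 - (2 * √c * √δ) ^ 2| / (2 * √c * √δ) :=
        abs_sub_le_abs_sq_sub_div ht (by positivity)
    _ ≤ M * δ ^ 2 / (2 * √c * √δ) := by rw [hb]; gcongr
    _ = M / (2 * √c) * (δ * √δ) := by
        field_simp
        rw [sq_sqrt hδ₀.le]
    _ ≤ M / (2 * √c) * δ := by gcongr; exact mul_le_of_le_one_right hδ₀.le (sqrt_le_one.2 hδ₁)

lemma two_mul_tanh_mul_le_sub_one {d t : ℝ} (hd : 0 ≤ d) (ht : 0 ≤ t) :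
    2 * tanh d * t ≤ cosh t * cosh (d + t) / cosh (d - t) - 1 := by
  rw [cosh_mul_cosh_add_div_cosh_sub_sub_one]
  have := two_mul_le_sinh_two_mul_div (tanh_nonneg hd) (tanh_lt_one d).le ht
  nlinarith [one_le_cosh t, tanh_nonneg hd]

lemma sub_one_le_two_mul_tanh_mul_add_sq {d t : ℝ} (hd : 0 ≤ d) (ht₀ : 0 ≤ t) (ht₁ : t ≤ 1 / 2) :
    cosh t * cosh (d + t) / cosh (d - t) - 1 ≤ 2 * tanh d * t + 13 * t ^ 2 := by
  rw [cosh_mul_cosh_add_div_cosh_sub_sub_one]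
  have := sinh_two_mul_div_le (tanh_lt_one d).le ht₀ ht₁
  have := cosh_sub_one_le_sq (abs_le.2 ⟨by linarith, by linarith⟩ : |t| ≤ 1)
  nlinarith [tanh_nonneg hd, tanh_lt_one d]

/-- For `0 < δ < d`, the quantity `cosh δ · cosh(d+δ)/cosh(d−δ)` is at least `1` (so its
`arcosh` is well defined), and `arcosh(cosh δ · cosh(d+δ)/cosh(d−δ)) = 2 (tanh d)^{1/2} δ^{1/2}
+ O(δ)` as `δ → 0` with `d` fixed. -/
theorem arcosh_projection_estimate (d : ℝ) (hd : 0 < d) :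
    (∀ δ : ℝ, 0 < δ → δ < d →
      1 ≤ Real.cosh δ * Real.cosh (d + δ) / Real.cosh (d - δ)) ∧
    (∃ C δ₀ : ℝ, 0 < C ∧ 0 < δ₀ ∧ ∀ δ : ℝ, 0 < δ → δ < δ₀ →
      |_root_.arcosh (Real.cosh δ * Real.cosh (d + δ) / Real.cosh (d - δ)) -
        2 * Real.sqrt (Real.tanh d) * Real.sqrt δ| ≤ C * δ) := by
  have hT : 0 < tanh d := by
    rw [tanh_eq_sinh_div_cosh]
    exact div_pos (sinh_pos_iff.2 hd) (cosh_pos d)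
  refine ⟨fun δ hδ _ => ?_, 188 / (2 * √(tanh d)), 1 / 2, by positivity, by norm_num,
    fun δ hδ₀ hδ₁ => ?_⟩
  · nlinarith [two_mul_tanh_mul_le_sub_one hd.le hδ.le]
  set x := cosh δ * cosh (d + δ) / cosh (d - δ)
  have hlow : 2 * tanh d * δ ≤ x - 1 := two_mul_tanh_mul_le_sub_one hd.le hδ₀.le
  have hup : x - 1 ≤ 2 * tanh d * δ + 13 * δ ^ 2 :=
    sub_one_le_two_mul_tanh_mul_add_sq hd.le hδ₀.le hδ₁.le
  have hx : 1 ≤ x := by nlinarith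
  have hx₉ : x - 1 ≤ 9 * δ := by nlinarith [tanh_lt_one d]
  have hsq : (x - 1) ^ 2 ≤ 81 * δ ^ 2 := by nlinarith
  obtain ⟨hsq_lower, hsq_upper⟩ := abs_le.1 (abs_arcosh_sq_sub_le hx)
  rw [show _root_.arcosh x = Real.arcosh x from rfl]
  refine abs_sub_two_mul_sqrt_mul_sqrt_le (arcosh_nonneg hx) hT hδ₀ (by linarith) ?_
  rw [abs_le]
  constructor <;> linarith
end

section
/- Let f : U ⊆ ℝ^m → ℝ be convex, twice differentiable at a point x₀ ∈ U in the Alexandrov sense with second-order model f̄(y) = f(x₀) + ⟨∇f(x₀), y−x₀⟩ + ½⟨∇²f(x₀)(y−x₀), y−x₀⟩. Then the subgradient is differentiable at x₀ in the sense that sup over x ∈ B_ε(x₀) and v ∈ ∂f(x) of |v − ∇f̄(x)| = o(ε) as ε → 0. -/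
open Real Filter Asymptotics RealInnerProductSpace Metric

/-- `f` is twice differentiable at `x` in the Alexandrov sense, with gradient `g` and Hessian
`A`: `f(y) = f(x) + ⟪g, y−x⟫ + ½⟪A(y−x), y−x⟫ + o(|y−x|²)`. -/
def Alexandrov2 {m : ℕ} (f : EuclideanSpace ℝ (Fin m) → ℝ) (x g : EuclideanSpace ℝ (Fin m))
    (A : EuclideanSpace ℝ (Fin m) →L[ℝ] EuclideanSpace ℝ (Fin m)) : Prop :=
  (fun y => f y - f x - ⟪g, y - x⟫ - (1 / 2) * ⟪A (y - x), y - x⟫)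
    =o[nhds x] fun y => ‖y - x‖ ^ 2

/-- The subgradient of `f` at `x` relative to `U`. -/
def subgrad {m : ℕ} (f : EuclideanSpace ℝ (Fin m) → ℝ) (U : Set (EuclideanSpace ℝ (Fin m)))
    (x : EuclideanSpace ℝ (Fin m)) : Set (EuclideanSpace ℝ (Fin m)) :=
  {v | ∀ y ∈ U, f x + ⟪v, y - x⟫ ≤ f y}

set_option maxHeartbeats 1000000 in
/-- Mignot/Rockafellar: if the convex function `f` is twice Alexandrov differentiable at `x₀`
with gradient `g` and Hessian `A`, then the subgradient map is differentiable at `x₀`: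
`sup_{x ∈ B_ε(x₀)} sup_{v ∈ ∂f(x)} |v − (g + A(x − x₀))| = o(ε)` as `ε → 0`. -/
theorem subgradient_differentiable_of_alexandrov {m : ℕ}
    (U : Set (EuclideanSpace ℝ (Fin m))) (hU : IsOpen U) (hUconv : Convex ℝ U)
    (f : EuclideanSpace ℝ (Fin m) → ℝ) (hf : ConvexOn ℝ U f)
    (x₀ : EuclideanSpace ℝ (Fin m)) (hx₀ : x₀ ∈ U)
    (g : EuclideanSpace ℝ (Fin m))
    (A : EuclideanSpace ℝ (Fin m) →L[ℝ] EuclideanSpace ℝ (Fin m))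
    (hsymm : ∀ v w, ⟪A v, w⟫ = ⟪v, A w⟫)
    (hA : Alexandrov2 f x₀ g A) :
    ∀ c > (0 : ℝ), ∃ ε₀ > (0 : ℝ), ∀ ε : ℝ, 0 < ε → ε < ε₀ →
      ∀ x ∈ Metric.ball x₀ ε ∩ U, ∀ v ∈ subgrad f U x,
        ‖v - (g + A (x - x₀))‖ ≤ c * ε := by
  intro c hc
  have hA1 : (0:ℝ) < ‖A‖ + 1 := by positivity
  set t : ℝ := c / (2 * (‖A‖ + 1)) with ht
  have htpos : 0 < t := by positivity
  set δ : ℝ := c * t / (8 * (1 + t) ^ 2) with hδdef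
  have hδpos : 0 < δ := by positivity
  have h1 := hA.def hδpos
  rw [Metric.eventually_nhds_iff] at h1
  obtain ⟨r₁, hr₁pos, hball⟩ := h1
  obtain ⟨r₂, hr₂pos, hUball⟩ := Metric.isOpen_iff.mp hU x₀ hx₀
  refine ⟨min r₁ r₂ / (1 + t), by positivity, ?_⟩
  intro ε hε hεr x hx v hv
  obtain ⟨hxball, hxU⟩ := hx
  set a := x - x₀ with ha
  set w := v - (g + A a) with hw
  have hwa : (0:ℝ) ≤ ‖w‖ := norm_nonneg _
  rcases eq_or_lt_of_le hwa with hw0 | hwpos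
  · rw [← hw0]; positivity
  set s := t * ε / ‖w‖ with hs
  have hspos : 0 < s := div_pos (mul_pos htpos hε) hwpos
  set y := x + s • w with hy
  have hb : y - x = s • w := by rw [hy]; abel
  have hbnorm : ‖y - x‖ = t * ε := by
    rw [hb, norm_smul, Real.norm_eq_abs, abs_of_pos hspos, hs,
      div_mul_cancel₀ _ (ne_of_gt hwpos)]
  have hax : ‖a‖ < ε := by
    rw [ha, ← dist_eq_norm]; exact mem_ball.mp hxball
  have hεr1 : (1 + t) * ε < min r₁ r₂ := by
    rw [lt_div_iff₀ (by positivity : (0:ℝ) < 1 + t)] at hεr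
    linarith
  have hyx0 : y - x₀ = a + (y - x) := by rw [ha]; abel
  have hy0 : ‖y - x₀‖ < (1 + t) * ε := by
    calc ‖y - x₀‖ ≤ ‖a‖ + ‖y - x‖ := by rw [hyx0]; exact norm_add_le _ _
    _ < ε + t * ε := by rw [hbnorm]; linarith
    _ = (1 + t) * ε := by ring
  have hyr : dist y x₀ < min r₁ r₂ := by
    rw [dist_eq_norm]; linarith
  have hyU : y ∈ U := hUball (mem_ball.mpr (lt_of_lt_of_le hyr (min_le_right _ _)))
  have hxr1 : dist x x₀ < r₁ := by
    rw [dist_eq_norm, ← ha]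
    have : ε ≤ (1 + t) * ε := by nlinarith
    linarith [min_le_left r₁ r₂]
  have Hx := hball hxr1
  have Hy := hball (lt_of_lt_of_le hyr (min_le_left _ _))
  have Hx' : |f x - f x₀ - ⟪g, a⟫ - 1 / 2 * ⟪A a, a⟫| ≤ δ * ‖a‖ ^ 2 := by
    simpa [ha, Real.norm_eq_abs,
      abs_of_nonneg (by positivity : (0:ℝ) ≤ ‖x - x₀‖ ^ 2)] using Hx
  have Hy' : |f y - f x₀ - ⟪g, y - x₀⟫ - 1 / 2 * ⟪A (y - x₀), y - x₀⟫| ≤ δ * ‖y - x₀‖ ^ 2 := by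
    simpa [Real.norm_eq_abs,
      abs_of_nonneg (by positivity : (0:ℝ) ≤ ‖y - x₀‖ ^ 2)] using Hy
  obtain ⟨Hx1, Hx2⟩ := abs_le.mp Hx'
  obtain ⟨Hy1, Hy2⟩ := abs_le.mp Hy'
  have hinner1 : ⟪v, y - x⟫ = ⟪w, y - x⟫ + ⟪g, y - x⟫ + ⟪A a, y - x⟫ := by
    have hv' : v = w + g + A a := by rw [hw]; abel
    rw [hv', inner_add_left, inner_add_left]
  have hinner2 : ⟪w, y - x⟫ = t * ε * ‖w‖ := by
    rw [hb, real_inner_smul_right, real_inner_self_eq_norm_sq, hs]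
    field_simp
  have hexp : ⟪A (y - x₀), y - x₀⟫
      = ⟪A a, a⟫ + 2 * ⟪A a, y - x⟫ + ⟪A (y - x), y - x⟫ := by
    rw [hyx0, map_add, inner_add_left, inner_add_right, inner_add_right]
    have h := hsymm (y - x) a
    rw [h, real_inner_comm (y - x) (A a)]
    ring
  have hgsplit : ⟪g, y - x₀⟫ = ⟪g, a⟫ + ⟪g, y - x⟫ := by
    rw [hyx0, inner_add_right]
  have hAb : ⟪A (y - x), y - x⟫ ≤ ‖A‖ * (t * ε) ^ 2 := by
    calc ⟪A (y - x), y - x⟫ ≤ ‖A (y - x)‖ * ‖y - x‖ := real_inner_le_norm _ _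
    _ ≤ ‖A‖ * ‖y - x‖ * ‖y - x‖ :=
        mul_le_mul_of_nonneg_right (A.le_opNorm _) (norm_nonneg _)
    _ = ‖A‖ * (t * ε) ^ 2 := by rw [hbnorm]; ring
  have hsub := hv y hyU
  have hy0sq : ‖y - x₀‖ ^ 2 ≤ ((1 + t) * ε) ^ 2 :=
    pow_le_pow_left₀ (norm_nonneg _) hy0.le 2
  have haxsq : ‖a‖ ^ 2 ≤ ε ^ 2 := pow_le_pow_left₀ (norm_nonneg _) hax.le 2
  clear_value y s w a δ t
  -- key inequality
  have key : t * ε * ‖w‖ ≤ ‖A‖ * (t * ε) ^ 2 / 2 + δ * ((1 + t) * ε) ^ 2 + δ * ε ^ 2 := by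
    have h5 : δ * ‖y - x₀‖ ^ 2 ≤ δ * ((1 + t) * ε) ^ 2 :=
      mul_le_mul_of_nonneg_left hy0sq hδpos.le
    have h6 : δ * ‖a‖ ^ 2 ≤ δ * ε ^ 2 := mul_le_mul_of_nonneg_left haxsq hδpos.le
    linarith [hsub, Hy2, Hx1, hinner1, hinner2, hexp, hgsplit, hAb, h5, h6]
  -- arithmetic on constants
  have ht' : t * (2 * (‖A‖ + 1)) = c := by
    rw [ht]; exact div_mul_cancel₀ _ (by positivity)
  have hA2 : ‖A‖ * t ≤ c / 2 := by linarith [ht', htpos.le]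
  have hδ' : δ * (8 * (1 + t) ^ 2) = c * t := by
    rw [hδdef]; exact div_mul_cancel₀ _ (by positivity)
  have hδ2 : δ * ((1 + t) ^ 2 + 1) ≤ c * t / 4 := by
    linarith [hδ', mul_nonneg hδpos.le htpos.le, mul_nonneg hδpos.le (sq_nonneg t)]
  have hfin : t * ε * ‖w‖ ≤ t * ε * (c * ε) := by
    linarith [key,
      mul_le_mul_of_nonneg_right hA2 (by positivity : (0:ℝ) ≤ t * ε ^ 2 / 2),
      mul_le_mul_of_nonneg_right hδ2 (by positivity : (0:ℝ) ≤ ε ^ 2),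
      mul_nonneg (mul_nonneg (mul_nonneg hc.le htpos.le) hε.le) hε.le]
  exact le_of_mul_le_mul_left (by linarith [hfin]) (mul_pos htpos hε)
end
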